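/- Let s, t be integers with t ≥ 0 ≥ s, and let a, b be nonnegative integers with a + s ≤ b ≤ a + t. Then D(a,b;s,t) = Σ_{k∈ℤ} [ C(a+b, a − k(t−s+2)) − C(a+b, a − k(t−s+2) + t + 1) ], where the sum over k has only finitely many nonzero terms. -/

import Mathlib

/-!
Both sides satisfy Pascal's recursion `D(n + 1, x) = D(n, x) + D(n, x - 1)` (paths with `n` steps,
`x` of them to the right) at every point of the strip, and both vanish on the lines
`y = x + t + 1` and `y = x + s - 1` bounding it from outside. The right-hand side is
`P(x) - P(x + t + 1)` with `P(x) = Σₖ C(n, x - k d)`, `d = t - s + 2`; `P` is `d`-periodic and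
invariant under `x ↦ n - x`, and on either boundary line `x + t + 1` is the reflection of `x`
up to a multiple of `d`. Induction on `n` gives the formula.
-/

/-- Binomial coefficient `C(n,x)` with integer lower argument, zero when `x < 0` or `x > n`. -/
noncomputable def binomZ (n : ℕ) (x : ℤ) : ℕ := if 0 ≤ x then n.choose x.toNat else 0

/-- Circular Pascal array of order `d` with initial offset `y0`:
`σ_{n,k} = Σ_{i=0}^{y0} Σ_{j∈ℤ} C(n, k − i + d·j)`. -/
noncomputable def circPascal (d y0 n : ℕ) (k : ℤ) : ℕ :=
  ∑ i ∈ Finset.range (y0 + 1), ∑ᶠ j : ℤ, binomZ n (k - i + d * j)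

/-- Number of up-steps (`true` entries) among the first `j` steps of `f`. -/
def upCount {N : ℕ} (f : Fin N → Bool) (j : ℕ) : ℕ :=
  (Finset.univ.filter (fun i : Fin N => (i : ℕ) < j ∧ f i = true)).card

/-- `D(a,b;s,t)`: the number of monotonic lattice paths (unit right / unit up steps) from
`(0,0)` to `(a,b)` all of whose lattice points `(x,y)` satisfy `x + s ≤ y ≤ x + t`.
A path of length `a+b` is encoded by `f : Fin (a+b) → Bool` (`true` = up step); after
`j` steps the path is at `(j − upCount f j, upCount f j)`. -/
noncomputable def KMCount (a b : ℕ) (s t : ℤ) : ℕ :=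
  Nat.card {f : Fin (a + b) → Bool //
    upCount f (a + b) = b ∧
    ∀ j : ℕ, j ≤ a + b →
      ((j : ℤ) - upCount f j) + s ≤ (upCount f j : ℤ) ∧
      (upCount f j : ℤ) ≤ ((j : ℤ) - upCount f j) + t}

lemma support_binomZ_subset (n : ℕ) : Function.support (binomZ n) ⊆ Set.Icc 0 n := by
  intro x hx
  rw [Function.mem_support, binomZ] at hx
  split_ifs at hx with h
  · exact ⟨h, by by_contra hlt; exact hx (Nat.choose_eq_zero_of_lt (by omega))⟩
  · exact absurd rfl hx

lemma binomZ_symm (n : ℕ) (x : ℤ) : binomZ n (n - x) = binomZ n x := by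
  unfold binomZ
  split_ifs with h1 h2 h2
  · rcases le_or_gt x n with hxn | hxn
    · rw [show ((n : ℤ) - x).toNat = n - x.toNat by omega, Nat.choose_symm (by omega)]
    · rw [Nat.choose_eq_zero_of_lt (by omega), Nat.choose_eq_zero_of_lt (by omega)]
  · exact Nat.choose_eq_zero_of_lt (by omega)
  · exact (Nat.choose_eq_zero_of_lt (by omega)).symm
  · rfl

lemma binomZ_succ (n : ℕ) (x : ℤ) : binomZ (n + 1) x = binomZ n x + binomZ n (x - 1) := by
  unfold binomZ
  rcases lt_trichotomy x 0 with hx | rfl | hx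
  · simp only [if_neg (show ¬ 0 ≤ x by omega), if_neg (show ¬ 0 ≤ x - 1 by omega)]
  · simp
  · rw [if_pos hx.le, if_pos hx.le, if_pos (by omega),
      show x.toNat = (x - 1).toNat + 1 by omega, Nat.choose_succ_succ', add_comm]

lemma binomZ_zero (x : ℤ) : binomZ 0 x = if x = 0 then 1 else 0 := by
  unfold binomZ
  rcases lt_trichotomy x 0 with hx | rfl | hx
  · simp [hx.ne, not_le.mpr hx]
  · simp
  · simp [hx.le, hx.ne', Nat.choose_eq_zero_of_lt (show 0 < x.toNat by omega)]

noncomputable def periodicBinom (d : ℤ) (n : ℕ) (x : ℤ) : ℤ :=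
  ∑ᶠ k : ℤ, (binomZ n (x - k * d) : ℤ)

lemma hasFiniteSupport_binomZ_sub_mul {d : ℤ} (hd : d ≠ 0) (n : ℕ) (x : ℤ) :
    (fun k : ℤ => (binomZ n (x - k * d) : ℤ)).HasFiniteSupport := by
  refine Set.Finite.subset (s := (fun k : ℤ => x - k * d) ⁻¹' Set.Icc 0 n) ?_ ?_
  · refine (Set.finite_Icc _ _).preimage fun k _ l _ hkl => ?_
    exact mul_right_cancel₀ hd (by simpa using hkl)
  · intro k hk
    exact support_binomZ_subset n (by simpa using hk)

lemma periodicBinom_succ {d : ℤ} (hd : d ≠ 0) (n : ℕ) (x : ℤ) :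
    periodicBinom d (n + 1) x = periodicBinom d n x + periodicBinom d n (x - 1) := by
  unfold periodicBinom
  rw [← finsum_add_distrib (hasFiniteSupport_binomZ_sub_mul hd n x)
    (hasFiniteSupport_binomZ_sub_mul hd n (x - 1))]
  refine finsum_congr fun k => ?_
  rw [binomZ_succ, sub_right_comm]
  push_cast
  rfl

lemma periodicBinom_symm (d : ℤ) (n : ℕ) (x : ℤ) :
    periodicBinom d n (n - x) = periodicBinom d n x := by
  unfold periodicBinom
  rw [← finsum_comp_equiv (Equiv.neg ℤ)]
  refine finsum_congr fun k => ?_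
  rw [← binomZ_symm n (x - k * d)]
  simp only [Equiv.neg_apply]
  ring_nf

lemma periodicBinom_add_mul (d : ℤ) (n : ℕ) (x m : ℤ) :
    periodicBinom d n (x + m * d) = periodicBinom d n x := by
  unfold periodicBinom
  rw [← finsum_comp_equiv (Equiv.addRight m)]
  refine finsum_congr fun k => ?_
  simp only [Equiv.coe_addRight]
  ring_nf

lemma periodicBinom_eq_of_add_eq (d : ℤ) (n : ℕ) {x y : ℤ} (m : ℤ) (h : x + y = n + m * d) :
    periodicBinom d n x = periodicBinom d n y := by
  rw [← periodicBinom_symm, show (n : ℤ) - x = y - m * d by omega, ← periodicBinom_add_mul d n _ m,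
    sub_add_cancel]

lemma periodicBinom_zero {d : ℤ} (hd : d ≠ 0) (x : ℤ) :
    periodicBinom d 0 x = if d ∣ x then 1 else 0 := by
  unfold periodicBinom
  simp only [binomZ_zero, sub_eq_zero]
  split_ifs with hdx
  · obtain ⟨m, rfl⟩ := hdx
    rw [finsum_eq_single _ m fun k hk => by simp [mul_comm d, mul_right_cancel₀ hd |>.mt hk.symm]]
    simp [mul_comm]
  · refine finsum_eq_zero_of_forall_eq_zero fun k => ?_
    simp only [Nat.cast_ite, Nat.cast_one, Nat.cast_zero, ite_eq_right_iff, one_ne_zero]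
    rintro rfl
    exact hdx (dvd_mul_left d k)

lemma finsum_binomZ_sub_binomZ {d : ℤ} (hd : d ≠ 0) (n : ℕ) (x c : ℤ) :
    ∑ᶠ k : ℤ, ((binomZ n (x - k * d) : ℤ) - (binomZ n (x - k * d + c) : ℤ)) =
      periodicBinom d n x - periodicBinom d n (x + c) := by
  unfold periodicBinom
  rw [← finsum_sub_distrib (hasFiniteSupport_binomZ_sub_mul hd n x)
    (hasFiniteSupport_binomZ_sub_mul hd n (x + c))]
  simp only [sub_add_eq_add_sub]

lemma upCount_snoc {n : ℕ} (g : Fin n → Bool) (b : Bool) (j : ℕ) :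
    upCount (Fin.snoc g b : Fin (n + 1) → Bool) j =
      upCount g j + if n < j ∧ b = true then 1 else 0 := by
  simp only [upCount, Finset.card_filter, Fin.sum_univ_castSucc, Fin.snoc_castSucc,
    Fin.val_castSucc, Fin.snoc_last, Fin.val_last]

lemma upCount_of_le {N j : ℕ} (f : Fin N → Bool) (h : N ≤ j) : upCount f j = upCount f N := by
  unfold upCount
  congr 1
  refine Finset.filter_congr fun i _ => ?_
  simp only [i.isLt, i.isLt.trans_le h, true_and]

lemma upCount_snoc_of_le {n j : ℕ} (g : Fin n → Bool) (b : Bool) (hj : j ≤ n) :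
    upCount (Fin.snoc g b : Fin (n + 1) → Bool) j = upCount g j := by
  simp [upCount_snoc, hj.not_gt]

lemma upCount_snoc_last {n : ℕ} (g : Fin n → Bool) (b : Bool) :
    upCount (Fin.snoc g b : Fin (n + 1) → Bool) (n + 1) = upCount g n + b.toNat := by
  rw [upCount_snoc, upCount_of_le g n.le_succ]
  cases b <;> simp

lemma Nat.card_subtype_eq_sum_snoc {α : Type*} [Fintype α] {n : ℕ}
    (P : (Fin (n + 1) → α) → Prop) :
    Nat.card {f // P f} = ∑ a, Nat.card {g : Fin n → α // P (Fin.snoc g a)} := by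
  rw [← Nat.card_congr ((Fin.snocEquiv fun _ => α).subtypeEquiv
      (p := fun x => P (Fin.snoc x.2 x.1)) fun _ => Iff.rfl),
    Nat.card_congr (Equiv.subtypeProdEquivSigmaSubtype fun a g => P (Fin.snoc g a)),
    Nat.card_sigma]

def InStrip (s t x y : ℤ) : Prop := x + s ≤ y ∧ y ≤ x + t

section StripPaths

variable (s t : ℤ)

def StaysInStrip {n : ℕ} (f : Fin n → Bool) : Prop :=
  ∀ j ≤ n, InStrip s t ((j : ℤ) - upCount f j) (upCount f j)

noncomputable def stripPathCount (n : ℕ) (x : ℤ) : ℕ :=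
  Nat.card {f : Fin n → Bool // (n : ℤ) - upCount f n = x ∧ StaysInStrip s t f}

variable {s t}

lemma staysInStrip_snoc_iff {n : ℕ} (g : Fin n → Bool) (b : Bool) :
    StaysInStrip s t (Fin.snoc g b : Fin (n + 1) → Bool) ↔
      StaysInStrip s t g ∧
        InStrip s t ((n : ℤ) + 1 - (upCount g n + b.toNat)) (upCount g n + b.toNat) := by
  constructor
  · intro h
    refine ⟨fun j hj => ?_, ?_⟩
    · simpa only [upCount_snoc_of_le g b hj] using h j (by omega)
    · simpa [upCount_snoc_last] using h (n + 1) le_rfl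
  · rintro ⟨hg, hlast⟩ j hj
    rcases hj.lt_or_eq with hj | rfl
    · simpa only [upCount_snoc_of_le g b (Nat.lt_succ_iff.mp hj)] using hg j (by omega)
    · simpa [upCount_snoc_last] using hlast

lemma stripPathCount_eq_zero {n : ℕ} {x : ℤ} (h : ¬InStrip s t x (n - x)) :
    stripPathCount s t n x = 0 := by
  refine Nat.card_eq_zero.mpr (Or.inl ⟨fun ⟨f, hx, hf⟩ => h ?_⟩)
  subst hx
  simpa using hf n le_rfl

lemma stripPathCount_zero (hs : s ≤ 0) (ht : 0 ≤ t) (x : ℤ) :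
    stripPathCount s t 0 x = if x = 0 then 1 else 0 := by
  have hup (f : Fin 0 → Bool) (j : ℕ) : upCount f j = 0 := by simp [upCount]
  have hf (f : Fin 0 → Bool) : StaysInStrip s t f := fun j hj => by
    simp only [Nat.le_zero.mp hj, hup, InStrip]
    omega
  unfold stripPathCount
  split_ifs with hx <;> simp [hup, hf, eq_comm, hx]

lemma stripPathCount_succ {n : ℕ} {x : ℤ} (h : InStrip s t x (n + 1 - x)) :
    stripPathCount s t (n + 1) x = stripPathCount s t n x + stripPathCount s t n (x - 1) := by
  have key (b : Bool) (g : Fin n → Bool) :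
      ((n + 1 : ℕ) : ℤ) - upCount (Fin.snoc g b : Fin (n + 1) → Bool) (n + 1) = x ∧
          StaysInStrip s t (Fin.snoc g b : Fin (n + 1) → Bool) ↔
        (n : ℤ) - upCount g n = x - 1 + b.toNat ∧ StaysInStrip s t g := by
    rw [staysInStrip_snoc_iff, upCount_snoc_last]
    push_cast
    constructor
    · rintro ⟨hx, hg, -⟩
      exact ⟨by omega, hg⟩
    · rintro ⟨hx, hg⟩
      refine ⟨by omega, hg, ?_⟩
      convert h using 2 <;> omega
  unfold stripPathCount
  rw [Nat.card_subtype_eq_sum_snoc, Fintype.sum_bool]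
  congr 1 <;> refine Nat.card_congr (Equiv.subtypeEquivRight fun g => ?_)
  · simpa using key true g
  · simpa using key false g

theorem stripPathCount_eq_periodicBinom_sub (hs : s ≤ 0) (ht : 0 ≤ t) (n : ℕ) :
    ∀ x : ℤ, InStrip s t x (n - x) →
      (stripPathCount s t n x : ℤ) =
        periodicBinom (t - s + 2) n x - periodicBinom (t - s + 2) n (x + t + 1) := by
  have hd : t - s + 2 ≠ 0 := by omega
  induction n with
  | zero =>
    intro x hx
    simp only [InStrip, Nat.cast_zero] at hx
    have hx0 : t - s + 2 ∣ x ↔ x = 0 := by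
      refine ⟨fun hdvd => Int.eq_zero_of_abs_lt_dvd hdvd (abs_lt.mpr ⟨by omega, by omega⟩), ?_⟩
      rintro rfl
      exact dvd_zero _
    have hxt : ¬t - s + 2 ∣ x + t + 1 := fun hdvd => by
      have := Int.le_of_dvd (by omega) hdvd
      omega
    rw [stripPathCount_zero hs ht, periodicBinom_zero hd, periodicBinom_zero hd, if_neg hxt]
    simp [hx0]
  | succ n ih =>
    intro x hx
    -- Dropping the last step of a path ending in the strip lands in the strip or on one of the
    -- two boundary lines, where both sides vanish.
    have step (y : ℤ) (hy : InStrip s t y (n - y) ∨ n = 2 * y + s - 1 ∨ n = 2 * y + t + 1) :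
        (stripPathCount s t n y : ℤ) =
          periodicBinom (t - s + 2) n y - periodicBinom (t - s + 2) n (y + t + 1) := by
      rcases hy with hy | hy | hy
      · exact ih y hy
      · rw [stripPathCount_eq_zero (by simp only [InStrip]; omega),
          periodicBinom_eq_of_add_eq _ n 1 (by omega : y + (y + t + 1) = n + 1 * (t - s + 2))]
        simp
      · rw [stripPathCount_eq_zero (by simp only [InStrip]; omega),
          periodicBinom_eq_of_add_eq _ n 0 (by omega : y + (y + t + 1) = n + 0 * (t - s + 2))]
        simp
    simp only [InStrip, Nat.cast_succ] at hx
    rw [stripPathCount_succ (by simpa only [InStrip] using hx), Nat.cast_add,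
      step x (by simp only [InStrip]; omega), step (x - 1) (by simp only [InStrip]; omega),
      periodicBinom_succ hd, periodicBinom_succ hd, show x - 1 + t + 1 = x + t + 1 - 1 by ring]
    ring

end StripPaths

lemma KMCount_eq_stripPathCount (a b : ℕ) (s t : ℤ) :
    KMCount a b s t = stripPathCount s t (a + b) a :=
  Nat.card_congr <| Equiv.subtypeEquivRight fun f => and_congr_left' <| by push_cast; omega

/-- The Krattenthaler–Mohanty formula:
`D(a,b;s,t) = Σ_{k∈ℤ} [C(a+b, a−k(t−s+2)) − C(a+b, a−k(t−s+2)+t+1)]`. -/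
theorem KM_formula (s t : ℤ) (hs : s ≤ 0) (ht : 0 ≤ t) (a b : ℕ)
    (h1 : (a : ℤ) + s ≤ (b : ℤ)) (h2 : (b : ℤ) ≤ (a : ℤ) + t) :
    (KMCount a b s t : ℤ) =
      ∑ᶠ k : ℤ, ((binomZ (a + b) ((a : ℤ) - k * (t - s + 2)) : ℤ) -
        (binomZ (a + b) ((a : ℤ) - k * (t - s + 2) + t + 1) : ℤ)) := by
  have hsum := finsum_binomZ_sub_binomZ (show t - s + 2 ≠ 0 by omega) (a + b) a (t + 1)
  simp only [← add_assoc] at hsum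
  rw [hsum, KMCount_eq_stripPathCount,
    stripPathCount_eq_periodicBinom_sub hs ht _ _ (by simp only [InStrip]; push_cast; omega)]
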